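/- For every w ∈ 𝔽 with |w| > 1, the bounded linear operator Â_w on c defined by (Â_w x)_k = w·(x_{k+1} + x_1 − 2l(x)) is chaotic: it possesses a hypercyclic vector and its set of periodic points is dense in c. -/

import Mathlib

/-!
The map `z ↦ (z (k + 1) + z 0)ₖ` sends `c₀` onto `c`, and since the limit of its image is `z 0`
it intertwines the Rolewicz operator `w • B` (`B` the backward shift) with `Â_w`. A continuous
map with dense range carries dense orbits and dense sets of periodic points along such a
semiconjugacy, so it suffices that `w • B` is chaotic on `c₀` when `‖w‖ > 1`.

If `y` vanishes from `N` on, then `(w • B)^[n]` kills `y` for `n ≥ N` and sends `y + v` to any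
prescribed `z`, where `v` is `z` shifted forward by `n` places and scaled by `w⁻¹ ^ n`, so `v` is
small. Hence `w • B` is topologically transitive, and on the separable Banach space `c₀` Baire's
theorem turns this into a dense orbit (Birkhoff). The same `y`, repeated with period `N` and damped
by `w⁻¹ ^ N` on each repetition, is an `N`-periodic point within `‖w‖⁻¹ ^ N * ‖y‖` of `y`.
-/

open Filter Topology BoundedContinuousFunction

/-- The space `c` of convergent sequences, as a submodule of the bounded sequences
`ℕ →ᵇ 𝕜` with the sup-norm (the Lean index `k` corresponds to the paper's index `k + 1`,
so the paper's first entry `x_1` is `x 0`). -/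
def convSeq (𝕜 : Type*) [RCLike 𝕜] : Submodule 𝕜 (ℕ →ᵇ 𝕜) where
  carrier := {x | ∃ L : 𝕜, Tendsto ⇑x atTop (nhds L)}
  add_mem' := by
    rintro x y ⟨Lx, hx⟩ ⟨Ly, hy⟩
    exact ⟨Lx + Ly, by rw [BoundedContinuousFunction.coe_add]; exact hx.add hy⟩
  zero_mem' := ⟨0, by rw [BoundedContinuousFunction.coe_zero]; exact tendsto_const_nhds⟩
  smul_mem' := by
    rintro c x ⟨L, hx⟩
    exact ⟨c • L, by simpa using hx.const_smul c⟩

open Set Function TopologicalSpace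
open scoped ZeroAtInfty

theorem exists_dense_range_iterate_of_transitive {X : Type*} [TopologicalSpace X] [BaireSpace X]
    [SecondCountableTopology X] [Nonempty X] {f : X → X} (hf : Continuous f)
    (htrans : ∀ U V : Set X, IsOpen U → U.Nonempty → IsOpen V → V.Nonempty →
      ∃ n, (U ∩ f^[n] ⁻¹' V).Nonempty) :
    ∃ x, Dense (range fun n => f^[n] x) := by
  obtain ⟨b, hbc, hb0, hb⟩ := exists_countable_basis X
  have hvisit : Dense (⋂ V ∈ b, ⋃ n, f^[n] ⁻¹' V) := by
    refine dense_biInter_of_isOpen (fun V hV => isOpen_iUnion fun n =>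
      (hb.isOpen hV).preimage (hf.iterate n)) hbc fun V hV => ?_
    refine dense_iff_inter_open.2 fun U hU hUne => ?_
    obtain ⟨n, x, hxU, hxV⟩ :=
      htrans U V hU hUne (hb.isOpen hV) (nonempty_iff_ne_empty.2 fun h => hb0 (h ▸ hV))
    exact ⟨x, hxU, mem_iUnion.2 ⟨n, hxV⟩⟩
  obtain ⟨x, hx⟩ := hvisit.nonempty
  refine ⟨x, hb.dense_iff.2 fun V hV _ => ?_⟩
  obtain ⟨n, hn⟩ := mem_iUnion.1 (mem_iInter₂.1 hx V hV)
  exact ⟨_, hn, n, rfl⟩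

namespace Function.Semiconj

variable {X Y : Type*} [TopologicalSpace X] [TopologicalSpace Y] {π : X → Y} {g : X → X}
  {f : Y → Y}

theorem dense_range_iterate (h : Semiconj π g f) (hπ : DenseRange π) (hπc : Continuous π)
    {x : X} (hx : Dense (range fun n => g^[n] x)) : Dense (range fun n => f^[n] (π x)) := by
  have : (range fun n => f^[n] (π x)) = π '' range fun n => g^[n] x := by
    rw [← range_comp]
    exact congrArg range (funext fun n => ((h.iterate_right n) x).symm)
  exact this ▸ hπ.dense_image hπc hx

theorem dense_periodicPts (h : Semiconj π g f) (hπ : DenseRange π) (hπc : Continuous π)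
    (hg : Dense (periodicPts g)) : Dense (periodicPts f) :=
  (hπ.dense_image hπc hg).mono h.mapsTo_periodicPts.image_subset

end Function.Semiconj

noncomputable section

namespace ZeroAtInftyContinuousMap

section Basic

variable {α β : Type*} [TopologicalSpace α] [NormedAddCommGroup β]

theorem norm_coe_le_norm (f : C₀(α, β)) (x : α) : ‖f x‖ ≤ ‖f‖ :=
  norm_toBCF_eq_norm (f := f) ▸ f.toBCF.norm_coe_le_norm x

theorem norm_le {f : C₀(α, β)} {C : ℝ} (hC : 0 ≤ C) : ‖f‖ ≤ C ↔ ∀ x, ‖f x‖ ≤ C :=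
  norm_toBCF_eq_norm (f := f) ▸ BoundedContinuousFunction.norm_le hC

def ofSeq (f : ℕ → β) (hf : Tendsto f atTop (𝓝 0)) : C₀(ℕ, β) :=
  ⟨⟨f, continuous_of_discreteTopology⟩, cocompact_eq_atTop (α := ℕ) ▸ hf⟩

@[simp] theorem ofSeq_apply (f : ℕ → β) (hf : Tendsto f atTop (𝓝 0)) (k : ℕ) :
    ofSeq f hf k = f k := rfl

theorem tendsto_atTop (f : C₀(ℕ, β)) : Tendsto f atTop (𝓝 0) :=
  cocompact_eq_atTop (α := ℕ) ▸ zero_at_infty f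

theorem dense_setOf_eventually_zero : Dense {f : C₀(ℕ, β) | ∃ N, ∀ k ≥ N, f k = 0} := by
  refine Metric.dense_iff.2 fun f ε hε => ?_
  obtain ⟨N, hN⟩ := Metric.tendsto_atTop.1 f.tendsto_atTop (ε / 2) (half_pos hε)
  have htrunc : Tendsto (fun k => if k < N then f k else 0) atTop (𝓝 0) :=
    tendsto_atTop_of_eventually_const fun k hk => if_neg (not_lt.2 hk)
  refine ⟨ofSeq _ htrunc, ?_, N, fun k hk => if_neg (not_lt.2 hk)⟩
  rw [Metric.mem_ball, dist_eq_norm]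
  refine ((norm_le (half_pos hε).le).2 fun k => ?_).trans_lt (half_lt_self hε)
  by_cases hk : k < N
  · simp [hk, (half_pos hε).le]
  · simpa [hk, dist_eq_norm] using (hN k (not_lt.1 hk)).le

end Basic

section Separable

variable {𝕜 : Type*} [NormedField 𝕜]

def single (j : ℕ) : C₀(ℕ, 𝕜) :=
  ofSeq (Pi.single j 1) (tendsto_atTop_of_eventually_const (i₀ := j + 1) fun _ hk =>
    Pi.single_eq_of_ne (by omega) 1)

theorem mem_span_range_single {f : C₀(ℕ, 𝕜)} {N : ℕ} (hf : ∀ k ≥ N, f k = 0) :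
    f ∈ Submodule.span 𝕜 (range single) := by
  induction N generalizing f with
  | zero => exact (show f = 0 from ext fun k => hf k k.zero_le) ▸ Submodule.zero_mem _
  | succ N ih =>
    rw [← sub_add_cancel f (f N • single N)]
    refine Submodule.add_mem _ (ih fun k hk => ?_)
      (Submodule.smul_mem _ _ (Submodule.subset_span ⟨N, rfl⟩))
    rcases hk.eq_or_lt with rfl | hk
    · simp [single]
    · simp [single, hf k hk, Pi.single_eq_of_ne hk.ne']

instance [SeparableSpace 𝕜] : SeparableSpace C₀(ℕ, 𝕜) := by
  refine isSeparable_univ_iff.1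
    (((countable_range single).isSeparable.span (R := 𝕜)).closure.mono ?_)
  rw [← dense_setOf_eventually_zero.closure_eq]
  exact closure_mono fun f ⟨N, hN⟩ => mem_span_range_single hN

end Separable

section Shift

variable (𝕜 E : Type*) [NormedField 𝕜] [NormedAddCommGroup E] [NormedSpace 𝕜 E]

def backwardShift : C₀(ℕ, E) →L[𝕜] C₀(ℕ, E) :=
  LinearMap.mkContinuous
    { toFun := fun f => ofSeq (fun k => f (k + 1)) ((tendsto_add_atTop_iff_nat 1).2 f.tendsto_atTop)
      map_add' := fun _ _ => rfl
      map_smul' := fun _ _ => rfl } 1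
    fun f => by
      rw [one_mul]
      exact (norm_le (norm_nonneg f)).2 fun k => norm_coe_le_norm f (k + 1)

variable {𝕜 E}

theorem smul_backwardShift_apply (w : 𝕜) (f : C₀(ℕ, E)) (k : ℕ) :
    (w • backwardShift 𝕜 E) f k = w • f (k + 1) := rfl

theorem iterate_smul_backwardShift_apply (w : 𝕜) (n : ℕ) (f : C₀(ℕ, E)) (k : ℕ) :
    (⇑(w • backwardShift 𝕜 E))^[n] f k = w ^ n • f (k + n) := by
  induction n generalizing k with
  | zero => simp
  | succ n ih =>
    rw [iterate_succ_apply', smul_backwardShift_apply, ih, smul_smul, ← pow_succ',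
      add_right_comm, add_assoc]

theorem iterate_smul_backwardShift_eq_zero (w : 𝕜) {y : C₀(ℕ, E)} {N n : ℕ}
    (hy : ∀ k ≥ N, y k = 0) (hn : N ≤ n) : (⇑(w • backwardShift 𝕜 E))^[n] y = 0 :=
  ext fun k => by rw [iterate_smul_backwardShift_apply, hy _ (by omega), smul_zero, zero_apply]

theorem exists_iterate_smul_backwardShift_eq {w : 𝕜} (hw : w ≠ 0) (n : ℕ) (z : C₀(ℕ, E)) :
    ∃ v, (⇑(w • backwardShift 𝕜 E))^[n] v = z ∧ ‖v‖ ≤ ‖w‖⁻¹ ^ n * ‖z‖ := by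
  have hv : Tendsto (fun k => if n ≤ k then w⁻¹ ^ n • z (k - n) else 0) atTop (𝓝 0) := by
    have : Tendsto (fun k => w⁻¹ ^ n • z (k - n)) atTop (𝓝 0) := by
      simpa using (z.tendsto_atTop.comp (tendsto_sub_atTop_nat n)).const_smul (w⁻¹ ^ n)
    exact this.congr' ((eventually_ge_atTop n).mono fun k hk => (if_pos hk).symm)
  refine ⟨ofSeq _ hv, ext fun k => ?_, (norm_le (by positivity)).2 fun k => ?_⟩
  · rw [iterate_smul_backwardShift_apply, ofSeq_apply, if_pos (n.le_add_left k),
      Nat.add_sub_cancel, smul_smul, ← mul_pow, mul_inv_cancel₀ hw, one_pow, one_smul]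
  · rw [ofSeq_apply]
    split_ifs
    · rw [norm_smul, norm_pow, norm_inv]
      gcongr
      exact norm_coe_le_norm _ _
    · rw [norm_zero]
      positivity

theorem eventually_inv_pow_mul_lt {r : ℝ} (hr : 1 < r) (C : ℝ) {ε : ℝ} (hε : 0 < ε) :
    ∀ᶠ n in atTop, r⁻¹ ^ n * C < ε := by
  have := (tendsto_pow_atTop_nhds_zero_of_lt_one (by positivity)
    (inv_lt_one_of_one_lt₀ hr)).mul_const C
  rw [zero_mul] at this
  exact this.eventually_lt_const hε

theorem exists_nonempty_inter_preimage_iterate_smul_backwardShift {w : 𝕜} (hw : 1 < ‖w‖)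
    {U V : Set C₀(ℕ, E)} (hU : IsOpen U) (hUne : U.Nonempty) (hVne : V.Nonempty) :
    ∃ n, (U ∩ (⇑(w • backwardShift 𝕜 E))^[n] ⁻¹' V).Nonempty := by
  obtain ⟨y, hyU, N, hyN⟩ := dense_setOf_eventually_zero.inter_open_nonempty U hU hUne
  obtain ⟨z, hz⟩ := hVne
  obtain ⟨ε, hε, hball⟩ := Metric.isOpen_iff.1 hU y hyU
  obtain ⟨n, hNn, hn⟩ :=
    ((eventually_ge_atTop N).and (eventually_inv_pow_mul_lt hw ‖z‖ hε)).exists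
  obtain ⟨v, hv, hvn⟩ :=
    exists_iterate_smul_backwardShift_eq (norm_pos_iff.1 (one_pos.trans hw)) n z
  refine ⟨n, y + v, hball ?_, ?_⟩
  · rw [Metric.mem_ball, dist_eq_norm, add_sub_cancel_left]
    exact hvn.trans_lt hn
  · rw [mem_preimage, ← pow_apply_eq_iterate, map_add, pow_apply_eq_iterate,
      pow_apply_eq_iterate, hv, iterate_smul_backwardShift_eq_zero w hyN hNn, zero_add]
    exact hz

theorem exists_isPeriodicPt_smul_backwardShift_norm_sub_le {w : 𝕜} (hw : 1 < ‖w‖)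
    {y : C₀(ℕ, E)} {N : ℕ} (hN : 0 < N) (hy : ∀ k ≥ N, y k = 0) :
    ∃ x, IsPeriodicPt (⇑(w • backwardShift 𝕜 E)) N x ∧ ‖x - y‖ ≤ ‖w‖⁻¹ ^ N * ‖y‖ := by
  have hw₀ : w ≠ 0 := norm_pos_iff.1 (one_pos.trans hw)
  have hw₁ : ‖w‖⁻¹ ≤ 1 := inv_le_one_of_one_le₀ hw.le
  have hnorm (k : ℕ) : ‖w⁻¹ ^ (N * (k / N)) • y (k % N)‖ ≤ ‖w‖⁻¹ ^ (N * (k / N)) * ‖y‖ := by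
    rw [norm_smul, norm_pow, norm_inv]
    gcongr
    exact norm_coe_le_norm y _
  have hx : Tendsto (fun k => w⁻¹ ^ (N * (k / N)) • y (k % N)) atTop (𝓝 0) := by
    have hlim := ((tendsto_pow_atTop_nhds_zero_of_lt_one (by positivity)
      (inv_lt_one_of_one_lt₀ hw)).comp (tendsto_sub_atTop_nat N)).mul_const ‖y‖
    rw [zero_mul] at hlim
    refine squeeze_zero_norm (fun k => (hnorm k).trans ?_) hlim
    have hdiv : k - N ≤ N * (k / N) := by
      have := Nat.div_add_mod k N
      have := Nat.mod_lt k hN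
      omega
    exact mul_le_mul_of_nonneg_right (pow_le_pow_of_le_one (by positivity) hw₁ hdiv)
      (norm_nonneg y)
  refine ⟨ofSeq _ hx, ext fun k => ?_, (norm_le (by positivity)).2 fun k => ?_⟩
  · rw [iterate_smul_backwardShift_apply, ofSeq_apply, ofSeq_apply, Nat.add_div_right k hN,
      Nat.add_mod_right, smul_smul, mul_add, mul_one, pow_add, mul_left_comm, ← mul_pow,
      mul_inv_cancel₀ hw₀, one_pow, mul_one]
  · rw [sub_apply, ofSeq_apply]
    rcases lt_or_ge k N with hk | hk
    · rw [Nat.div_eq_of_lt hk, Nat.mod_eq_of_lt hk, mul_zero, pow_zero, one_smul, sub_self,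
        norm_zero]
      positivity
    · rw [hy k hk, sub_zero]
      refine (hnorm k).trans (mul_le_mul_of_nonneg_right
        (pow_le_pow_of_le_one (by positivity) hw₁ ?_) (norm_nonneg y))
      exact Nat.le_mul_of_pos_right N (Nat.div_pos hk hN)

theorem dense_periodicPts_smul_backwardShift {w : 𝕜} (hw : 1 < ‖w‖) :
    Dense (periodicPts ⇑(w • backwardShift 𝕜 E)) := by
  refine Metric.dense_iff.2 fun f ε hε => ?_
  obtain ⟨y, hyf, N₀, hyN₀⟩ :=
    Metric.dense_iff.1 dense_setOf_eventually_zero f (ε / 2) (half_pos hε)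
  obtain ⟨N, hN, hNε⟩ :=
    ((eventually_ge_atTop (N₀ + 1)).and (eventually_inv_pow_mul_lt hw ‖y‖ (half_pos hε))).exists
  obtain ⟨x, hx, hxy⟩ := exists_isPeriodicPt_smul_backwardShift_norm_sub_le hw (N := N)
    (by omega) fun k hk => hyN₀ k (by omega)
  refine ⟨x, ?_, mk_mem_periodicPts (by omega) hx⟩
  rw [Metric.mem_ball] at hyf ⊢
  calc dist x f ≤ dist x y + dist y f := dist_triangle x y f
    _ < ε / 2 + ε / 2 := add_lt_add_of_le_of_lt (dist_eq_norm x y ▸ hxy.trans hNε.le) hyf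
    _ = ε := add_halves ε

theorem exists_dense_range_iterate_smul_backwardShift [CompleteSpace 𝕜] [SeparableSpace 𝕜]
    {w : 𝕜} (hw : 1 < ‖w‖) :
    ∃ z : C₀(ℕ, 𝕜), Dense (range fun n => (⇑(w • backwardShift 𝕜 𝕜))^[n] z) :=
  exists_dense_range_iterate_of_transitive (map_continuous _) fun _ _ hU hUne _ hVne =>
    exists_nonempty_inter_preimage_iterate_smul_backwardShift hw hU hUne hVne

end Shift

section ConvSeq

theorem norm_apply_succ_add_apply_zero_le {β : Type*} [NormedAddCommGroup β] (z : C₀(ℕ, β))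
    (k : ℕ) : ‖z (k + 1) + z 0‖ ≤ 2 * ‖z‖ :=
  (norm_add_le _ _).trans (by linarith [norm_coe_le_norm z (k + 1), norm_coe_le_norm z 0])

theorem tendsto_apply_succ_add_apply_zero {β : Type*} [NormedAddCommGroup β] (z : C₀(ℕ, β)) :
    Tendsto (fun k => z (k + 1) + z 0) atTop (𝓝 (z 0)) := by
  simpa using (z.tendsto_atTop.comp (tendsto_add_atTop_nat 1)).add_const (z 0)

variable (𝕜 : Type*) [RCLike 𝕜]

def toConvSeq : C₀(ℕ, 𝕜) →L[𝕜] convSeq 𝕜 :=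
  LinearMap.mkContinuous
    { toFun := fun z => ⟨.ofNormedAddCommGroup (fun k => z (k + 1) + z 0)
          continuous_of_discreteTopology (2 * ‖z‖) (norm_apply_succ_add_apply_zero_le z),
        z 0, tendsto_apply_succ_add_apply_zero z⟩
      map_add' := fun z z' => Subtype.ext <| BoundedContinuousFunction.ext fun k => by
        change z (k + 1) + z' (k + 1) + (z 0 + z' 0) = z (k + 1) + z 0 + (z' (k + 1) + z' 0)
        abel
      map_smul' := fun c z => Subtype.ext <| BoundedContinuousFunction.ext fun k => by
        change c * z (k + 1) + c * z 0 = c * (z (k + 1) + z 0)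
        ring } 2
    fun z => BoundedContinuousFunction.norm_ofNormedAddCommGroup_le _ (by positivity)
      (norm_apply_succ_add_apply_zero_le z)

variable {𝕜}

theorem toConvSeq_apply (z : C₀(ℕ, 𝕜)) (k : ℕ) :
    (toConvSeq 𝕜 z : ℕ →ᵇ 𝕜) k = z (k + 1) + z 0 := rfl

theorem tendsto_toConvSeq (z : C₀(ℕ, 𝕜)) :
    Tendsto (fun k => (toConvSeq 𝕜 z : ℕ →ᵇ 𝕜) k) atTop (𝓝 (z 0)) :=
  tendsto_apply_succ_add_apply_zero z

theorem toConvSeq_surjective : Surjective (toConvSeq 𝕜) := by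
  rintro ⟨x, L, hL⟩
  have hz : Tendsto (fun | 0 => L | k + 1 => x k - L) atTop (𝓝 0) :=
    (tendsto_add_atTop_iff_nat 1).1 (by simpa using hL.sub_const L)
  exact ⟨ofSeq _ hz, Subtype.ext <| BoundedContinuousFunction.ext fun k => sub_add_cancel (x k) L⟩

end ConvSeq

end ZeroAtInftyContinuousMap

end

open ZeroAtInftyContinuousMap

/-- For every `w` with `‖w‖ > 1`, the bounded linear operator `Â_w` on `c`
defined by `(Â_w x)_k = w (x_{k+1} + x_1 - 2 l(x))` (paper's `1`-based `k ≥ 1`, i.e.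
`(Â_w x) k = w * (x (k+1) + x 0 - 2 l(x))` in `0`-based indexing, where `l` is the limit
functional) is chaotic: it possesses a hypercyclic vector and its set of periodic points is
dense in `c`. -/
theorem bounded_operator_on_c_chaotic
    (𝕜 : Type*) [RCLike 𝕜] (w : 𝕜) (hw : 1 < ‖w‖)
    (l : convSeq 𝕜 → 𝕜)
    (hl : ∀ x : convSeq 𝕜, Tendsto (fun k : ℕ => (x : ℕ →ᵇ 𝕜) k) atTop (nhds (l x)))
    (A : convSeq 𝕜 →L[𝕜] convSeq 𝕜)
    (hA : ∀ (x : convSeq 𝕜) (k : ℕ),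
      (A x : ℕ →ᵇ 𝕜) k = w * ((x : ℕ →ᵇ 𝕜) (k + 1) + (x : ℕ →ᵇ 𝕜) 0 - 2 * l x)) :
    (∃ x : convSeq 𝕜, Dense (Set.range fun n : ℕ => (A ^ n) x)) ∧
      Dense {x : convSeq 𝕜 | ∃ N : ℕ, 1 ≤ N ∧ (A ^ N) x = x} := by
  have hlim (z : C₀(ℕ, 𝕜)) : l (toConvSeq 𝕜 z) = z 0 :=
    tendsto_nhds_unique (hl _) (tendsto_toConvSeq z)
  have hsemi : Semiconj (toConvSeq 𝕜) ⇑(w • backwardShift 𝕜 𝕜) A := fun z =>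
    Subtype.ext <| BoundedContinuousFunction.ext fun k => by
      simp only [hA, hlim, toConvSeq_apply, smul_backwardShift_apply, smul_eq_mul]
      ring
  have hπ := (toConvSeq_surjective (𝕜 := 𝕜)).denseRange
  have hπc := (toConvSeq 𝕜).continuous
  obtain ⟨z, hz⟩ := exists_dense_range_iterate_smul_backwardShift hw
  refine ⟨⟨_, by simpa only [pow_apply_eq_iterate] using hsemi.dense_range_iterate hπ hπc hz⟩, ?_⟩
  refine (hsemi.dense_periodicPts hπ hπc (dense_periodicPts_smul_backwardShift hw)).mono ?_
  exact fun x ⟨N, hN, hx⟩ => ⟨N, hN, by rwa [pow_apply_eq_iterate]⟩
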